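/- arXiv:1408.5502 — 5 statements merged into one kernel-verified Lean document; each statement's English description precedes it below -/
import Mathlib

section
/- Let 1<q<2<r and A,B>0, and define Ψ(t)=t²−A·t^q−B·t^r for t≥0. Then sup_{t≥0} Ψ(t) > 0 if and only if A^{r−2}·B^{2−q} < d(r,q) := (r−2)^{r−2}·(2−q)^{2−q}/(r−q)^{r−q}. -/
/-!
Writing `Ψ(t) = t² (1 - f(t))` with `f(t) = A t^(q-2) + B t^(r-2)`, `sup Ψ > 0` means exactly that
`f < 1` somewhere on `(0, ∞)`. With `a = 2 - q` and `b = r - 2`, the terms `u = A t^(-a)` and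
`v = B t^b` satisfy `u^b v^a = A^b B^a` for every `t`, so the weighted AM-GM inequality
`u^b v^a (a+b)^(a+b) ≤ b^b a^a (u+v)^(a+b)` bounds `f` from below by a constant, and the bound is
attained at the `t` where `a u = b v`. Hence `inf f < 1` iff `A^b B^a (a+b)^(a+b) < b^b a^a`.
-/

open Real Set

section WeightedAMGM

variable {a b u v : ℝ}

theorem rpow_mul_rpow_le_add_rpow (ha : 0 < a) (hb : 0 < b) (hu : 0 ≤ u) (hv : 0 ≤ v) :
    u ^ b * v ^ a * (a + b) ^ (a + b) ≤ b ^ b * a ^ a * (u + v) ^ (a + b) := by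
  have hs : 0 < a + b := by positivity
  have hamgm := geom_mean_le_arith_mean2_weighted (w₁ := b / (a + b)) (w₂ := a / (a + b))
    (p₁ := (a + b) / b * u) (p₂ := (a + b) / a * v) (by positivity) (by positivity)
    (by positivity) (by positivity) (by field_simp; ring)
  have hsum : b / (a + b) * ((a + b) / b * u) + a / (a + b) * ((a + b) / a * v) = u + v := by
    field_simp
  rw [hsum] at hamgm
  have hpow := rpow_le_rpow (by positivity) hamgm hs.le
  rw [mul_rpow (by positivity) (by positivity), ← rpow_mul (by positivity),
    ← rpow_mul (by positivity), div_mul_cancel₀ _ hs.ne', div_mul_cancel₀ _ hs.ne',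
    mul_rpow (by positivity) hu, mul_rpow (by positivity) hv, div_rpow hs.le hb.le,
    div_rpow hs.le ha.le] at hpow
  have hss : (a + b) ^ b * (a + b) ^ a = (a + b) ^ (a + b) := by
    rw [← rpow_add hs, add_comm]
  calc u ^ b * v ^ a * (a + b) ^ (a + b)
      = b ^ b * a ^ a * ((a + b) ^ b / b ^ b * u ^ b * ((a + b) ^ a / a ^ a * v ^ a)) := by
        rw [← hss]; field_simp
    _ ≤ b ^ b * a ^ a * (u + v) ^ (a + b) := by gcongr

theorem rpow_mul_rpow_eq_add_rpow (ha : 0 < a) (hb : 0 < b) (hu : 0 ≤ u)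
    (heq : a * u = b * v) :
    u ^ b * v ^ a * (a + b) ^ (a + b) = b ^ b * a ^ a * (u + v) ^ (a + b) := by
  obtain ⟨c, hc, rfl, rfl⟩ : ∃ c, 0 ≤ c ∧ u = b * c ∧ v = a * c :=
    ⟨u / b, by positivity, by field_simp, by field_simp; linarith⟩
  have hcc : c ^ b * c ^ a = c ^ (a + b) := by rw [← rpow_add' hc (by positivity), add_comm]
  rw [mul_rpow hb.le hc, mul_rpow ha.le hc, show b * c + a * c = (a + b) * c by ring,
    mul_rpow (by positivity) hc, ← hcc]
  ring

end WeightedAMGM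

section Minimum

variable {a b A B : ℝ}

theorem mul_rpow_neg_rpow_mul_mul_rpow_rpow (hA : 0 ≤ A) (hB : 0 ≤ B) {t : ℝ} (ht : 0 < t) :
    (A * t ^ (-a)) ^ b * (B * t ^ b) ^ a = A ^ b * B ^ a := by
  rw [mul_rpow hA (by positivity), mul_rpow hB (by positivity), ← rpow_mul ht.le,
    ← rpow_mul ht.le, mul_mul_mul_comm, ← rpow_add ht, neg_mul, mul_comm b a, neg_add_cancel,
    rpow_zero, mul_one]

theorem exists_mul_rpow_neg_eq_mul_rpow (ha : 0 < a) (hb : 0 < b) (hA : 0 < A) (hB : 0 < B) :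
    ∃ t > 0, a * (A * t ^ (-a)) = b * (B * t ^ b) := by
  set t := (a * A / (b * B)) ^ (a + b)⁻¹
  have ht : 0 < t := by positivity
  have hpow : t ^ a * t ^ b = a * A / (b * B) := by
    rw [← rpow_add ht, rpow_inv_rpow (by positivity) (add_pos ha hb).ne']
  refine ⟨t, ht, ?_⟩
  rw [rpow_neg ht.le]
  field_simp
  rw [show t ^ a * b * B * t ^ b = t ^ a * t ^ b * (b * B) by ring, hpow]
  field_simp

theorem exists_add_rpow_lt_one_iff (ha : 0 < a) (hb : 0 < b) (hA : 0 < A) (hB : 0 < B) :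
    (∃ t > 0, A * t ^ (-a) + B * t ^ b < 1) ↔
      A ^ b * B ^ a < b ^ b * a ^ a / (a + b) ^ (a + b) := by
  rw [lt_div_iff₀ (by positivity)]
  constructor
  · rintro ⟨t, ht, hlt⟩
    calc A ^ b * B ^ a * (a + b) ^ (a + b)
        = (A * t ^ (-a)) ^ b * (B * t ^ b) ^ a * (a + b) ^ (a + b) := by
          rw [mul_rpow_neg_rpow_mul_mul_rpow_rpow hA.le hB.le ht]
      _ ≤ b ^ b * a ^ a * (A * t ^ (-a) + B * t ^ b) ^ (a + b) :=
          rpow_mul_rpow_le_add_rpow ha hb (by positivity) (by positivity)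
      _ < b ^ b * a ^ a := mul_lt_of_lt_one_right (by positivity)
          (rpow_lt_one (by positivity) hlt (by positivity))
  · intro h
    obtain ⟨t, ht, heq⟩ := exists_mul_rpow_neg_eq_mul_rpow ha hb hA hB
    refine ⟨t, ht, ?_⟩
    rw [← mul_rpow_neg_rpow_mul_mul_rpow_rpow hA.le hB.le ht,
      rpow_mul_rpow_eq_add_rpow ha hb (by positivity) heq] at h
    nth_rw 2 [← mul_one (b ^ b * a ^ a)] at h
    exact (rpow_lt_one_iff' (by positivity) (add_pos ha hb)).1
      (lt_of_mul_lt_mul_left h (by positivity))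

end Minimum

section SupPositive

variable {q r A B : ℝ}

theorem rpow_eq_rpow_two_mul_rpow_sub_two {t : ℝ} (ht : 0 < t) (r : ℝ) :
    t ^ r = t ^ (2 : ℝ) * t ^ (r - 2) := by
  rw [← rpow_add ht, add_sub_cancel]

theorem bddAbove_image_rpow_two_sub (hr : 2 < r) (hA : 0 ≤ A) (hB : 0 < B) :
    BddAbove ((fun t : ℝ => t ^ (2:ℝ) - A * t ^ q - B * t ^ r) '' Ici 0) := by
  have hr2 : 0 < r - 2 := by linarith
  set T := B⁻¹ ^ (r - 2)⁻¹
  have hT : 0 < T := by positivity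
  refine ⟨T ^ (2:ℝ), ?_⟩
  rintro _ ⟨t, ht, rfl⟩
  have hAt : 0 ≤ A * t ^ q := mul_nonneg hA (rpow_nonneg ht q)
  rcases le_total t T with htT | hTt
  · have hBt : 0 ≤ B * t ^ r := mul_nonneg hB.le (rpow_nonneg ht r)
    have := rpow_le_rpow ht htT zero_le_two
    dsimp only
    linarith
  · have ht' : 0 < t := hT.trans_le hTt
    have hBt : 1 ≤ B * t ^ (r - 2) := by
      rw [← inv_le_iff_one_le_mul₀' hB, ← rpow_inv_rpow (inv_nonneg.2 hB.le) hr2.ne']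
      exact rpow_le_rpow hT.le hTt hr2.le
    have hsq : t ^ (2:ℝ) ≤ B * t ^ r := by
      rw [rpow_eq_rpow_two_mul_rpow_sub_two ht' r]
      have := mul_le_mul_of_nonneg_left hBt (rpow_nonneg ht'.le (2:ℝ))
      linarith
    have := rpow_nonneg hT.le (2:ℝ)
    dsimp only
    linarith

theorem rpow_two_sub_pos_iff {t : ℝ} (ht : 0 ≤ t) (hA : 0 ≤ A) (hB : 0 ≤ B) :
    0 < t ^ (2:ℝ) - A * t ^ q - B * t ^ r ↔ 0 < t ∧ A * t ^ (q - 2) + B * t ^ (r - 2) < 1 := by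
  rcases ht.eq_or_lt with rfl | ht
  · have := mul_nonneg hA (rpow_nonneg le_rfl q)
    have := mul_nonneg hB (rpow_nonneg le_rfl r)
    simp only [zero_rpow two_ne_zero, lt_irrefl, false_and, iff_false, not_lt]
    linarith
  · have hfactor : t ^ (2:ℝ) - A * t ^ q - B * t ^ r =
        t ^ (2:ℝ) * (1 - (A * t ^ (q - 2) + B * t ^ (r - 2))) := by
      rw [rpow_eq_rpow_two_mul_rpow_sub_two ht q, rpow_eq_rpow_two_mul_rpow_sub_two ht r]
      ring
    rw [hfactor, mul_pos_iff_of_pos_left (by positivity), sub_pos]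
    exact ⟨fun h => ⟨ht, h⟩, And.right⟩

theorem zero_lt_sSup_image_rpow_two_sub_iff (hr : 2 < r) (hA : 0 ≤ A) (hB : 0 < B) :
    0 < sSup ((fun t : ℝ => t ^ (2:ℝ) - A * t ^ q - B * t ^ r) '' Ici 0) ↔
      ∃ t > 0, A * t ^ (q - 2) + B * t ^ (r - 2) < 1 := by
  rw [lt_csSup_iff (bddAbove_image_rpow_two_sub hr hA hB) (nonempty_Ici.image _),
    exists_mem_image]
  constructor
  · rintro ⟨t, ht, hpos⟩
    exact ⟨t, ((rpow_two_sub_pos_iff ht hA hB.le).1 hpos)⟩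
  · rintro ⟨t, ht, hlt⟩
    exact ⟨t, ht.le, (rpow_two_sub_pos_iff ht.le hA hB.le).2 ⟨ht, hlt⟩⟩

end SupPositive

theorem stmt0_general (q r A B : ℝ) (hq2 : q < 2) (hr : 2 < r)
    (hA : 0 < A) (hB : 0 < B) :
    0 < sSup ((fun t : ℝ => t ^ (2:ℝ) - A * t ^ q - B * t ^ r) '' Set.Ici 0) ↔
      A ^ (r - 2) * B ^ (2 - q) <
        (r - 2) ^ (r - 2) * (2 - q) ^ (2 - q) / (r - q) ^ (r - q) := by
  have key := exists_add_rpow_lt_one_iff (a := 2 - q) (b := r - 2) (by linarith) (by linarith)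
    hA hB
  rw [neg_sub, show 2 - q + (r - 2) = r - q by ring] at key
  rw [zero_lt_sSup_image_rpow_two_sub_iff hr hA.le hB, key]

theorem stmt0 (q r A B : ℝ) (hq1 : 1 < q) (hq2 : q < 2) (hr : 2 < r)
    (hA : 0 < A) (hB : 0 < B) :
    0 < sSup ((fun t : ℝ => t ^ (2:ℝ) - A * t ^ q - B * t ^ r) '' Set.Ici 0) ↔
      A ^ (r - 2) * B ^ (2 - q) <
        (r - 2) ^ (r - 2) * (2 - q) ^ (2 - q) / (r - q) ^ (r - q) :=
  stmt0_general q r A B hq2 hr hA hB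
end

section
/- Let 1<q<2<r, A,B>0 with A^{r−2}·B^{2−q} < (r−2)^{r−2}(2−q)^{2−q}/(r−q)^{r−q}, and set t_B = ((2−q)/(B(r−q)))^{1/(r−2)}. Then t_B² − A·t_B^q − B·t_B^r = t_B²·[(r−2)/(r−q) − A·B^{(2−q)/(r−2)}·((r−q)/(2−q))^{(2−q)/(r−2)}] > 0. -/
/-!
Put `t = t_B`, `s = r - 2`, `u = 2 - q`. Factoring out `t²` leaves `1 - A t^(q-2) - B t^(r-2)`;
the choice of `t_B` makes `B t^(r-2) = u/(r-q)` and `t^(q-2) = (B (r-q)/u)^(u/s)`, which gives the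
identity. The bracket is positive because raising `A B^(u/s) ((r-q)/u)^(u/s) < s/(r-q)` to the power
`s` turns it into the hypothesis on `A^s B^u`.
-/

open Real

lemma rpow_sub_rpow_sub_rpow_eq_rpow_two_mul {t : ℝ} (ht : 0 < t) (A B q r : ℝ) :
    t ^ (2:ℝ) - A * t ^ q - B * t ^ r = t ^ (2:ℝ) * (1 - A * t ^ (q - 2) - B * t ^ (r - 2)) := by
  have hsplit : ∀ e : ℝ, t ^ e = t ^ (2:ℝ) * t ^ (e - 2) := fun e => by
    rw [← rpow_add ht]; ring_nf
  rw [hsplit q, hsplit r]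
  ring

lemma rpow_one_div_rpow {c : ℝ} (hc : 0 ≤ c) (s e : ℝ) : (c ^ (1 / s)) ^ e = c ^ (e / s) := by
  rw [← rpow_mul hc, one_div_mul_eq_div]

lemma mul_rpow_mul_rpow_lt_div_of_rpow_mul_rpow_lt {A B s u v : ℝ} (hA : 0 ≤ A) (hB : 0 ≤ B)
    (hs : 0 < s) (hu : 0 < u) (hv : s + u = v)
    (hd : A ^ s * B ^ u < s ^ s * u ^ u / v ^ v) :
    A * B ^ (u / s) * (v / u) ^ (u / s) < s / v := by
  subst hv
  have hv : 0 < s + u := by linarith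
  have hvu : 0 < (s + u) / u := by positivity
  have hlhs : (A * B ^ (u / s) * ((s + u) / u) ^ (u / s)) ^ s
      = A ^ s * B ^ u * ((s + u) / u) ^ u := by
    rw [mul_rpow (by positivity) (by positivity), mul_rpow hA (by positivity),
      ← rpow_mul hB, ← rpow_mul hvu.le, div_mul_cancel₀ u hs.ne']
  -- multiplying `hd` by `((s+u)/u)^u` cancels `u^u` and one factor `(s+u)^u` of `(s+u)^(s+u)`
  have hrhs : s ^ s * u ^ u / (s + u) ^ (s + u) * ((s + u) / u) ^ u = (s / (s + u)) ^ s := by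
    rw [div_rpow hv.le hu.le, div_rpow hs.le hv.le, rpow_add hv]
    have : 0 < u ^ u := by positivity
    have : 0 < (s + u) ^ u := by positivity
    have : 0 < (s + u) ^ s := by positivity
    field_simp
  rw [← rpow_lt_rpow_iff (by positivity) (by positivity) hs, hlhs, ← hrhs]
  exact mul_lt_mul_of_pos_right hd (by positivity)

theorem stmt1_general (q r A B : ℝ) (hq2 : q < 2) (hr : 2 < r)
    (hA : 0 < A) (hB : 0 < B)
    (hd : A ^ (r - 2) * B ^ (2 - q) <
      (r - 2) ^ (r - 2) * (2 - q) ^ (2 - q) / (r - q) ^ (r - q)) :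
    (((2 - q) / (B * (r - q))) ^ ((1:ℝ) / (r - 2))) ^ (2:ℝ)
        - A * (((2 - q) / (B * (r - q))) ^ ((1:ℝ) / (r - 2))) ^ q
        - B * (((2 - q) / (B * (r - q))) ^ ((1:ℝ) / (r - 2))) ^ r
      = (((2 - q) / (B * (r - q))) ^ ((1:ℝ) / (r - 2))) ^ (2:ℝ) *
          ((r - 2) / (r - q)
            - A * B ^ ((2 - q) / (r - 2)) * ((r - q) / (2 - q)) ^ ((2 - q) / (r - 2))) ∧
    0 < (((2 - q) / (B * (r - q))) ^ ((1:ℝ) / (r - 2))) ^ (2:ℝ) *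
          ((r - 2) / (r - q)
            - A * B ^ ((2 - q) / (r - 2)) * ((r - q) / (2 - q)) ^ ((2 - q) / (r - 2))) := by
  have hs : 0 < r - 2 := by linarith
  have hu : 0 < 2 - q := by linarith
  have hv : 0 < r - q := by linarith
  set c := (2 - q) / (B * (r - q)) with hc_def
  have hc : 0 < c := by positivity
  have hBc : B * (c ^ (1 / (r - 2))) ^ (r - 2) = (2 - q) / (r - q) := by
    rw [rpow_one_div_rpow hc.le, div_self hs.ne', rpow_one, hc_def]
    field_simp
  have hAc : (c ^ (1 / (r - 2))) ^ (q - 2)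
      = B ^ ((2 - q) / (r - 2)) * ((r - q) / (2 - q)) ^ ((2 - q) / (r - 2)) := by
    have hcinv : c⁻¹ = B * ((r - q) / (2 - q)) := by rw [hc_def]; field_simp
    rw [rpow_one_div_rpow hc.le, show (q - 2) / (r - 2) = -((2 - q) / (r - 2)) by ring,
      rpow_neg hc.le, ← inv_rpow hc.le, hcinv, mul_rpow hB.le (by positivity)]
  have hbracket := mul_rpow_mul_rpow_lt_div_of_rpow_mul_rpow_lt hA.le hB.le hs hu
    (by ring) hd
  rw [rpow_sub_rpow_sub_rpow_eq_rpow_two_mul (by positivity), hAc, hBc]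
  refine ⟨?_, mul_pos (by positivity) (by linarith)⟩
  rw [show (r - 2) / (r - q) = 1 - (2 - q) / (r - q) by field_simp; ring]
  ring

theorem stmt1 (q r A B : ℝ) (hq1 : 1 < q) (hq2 : q < 2) (hr : 2 < r)
    (hA : 0 < A) (hB : 0 < B)
    (hd : A ^ (r - 2) * B ^ (2 - q) <
      (r - 2) ^ (r - 2) * (2 - q) ^ (2 - q) / (r - q) ^ (r - q)) :
    (((2 - q) / (B * (r - q))) ^ ((1:ℝ) / (r - 2))) ^ (2:ℝ)
        - A * (((2 - q) / (B * (r - q))) ^ ((1:ℝ) / (r - 2))) ^ q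
        - B * (((2 - q) / (B * (r - q))) ^ ((1:ℝ) / (r - 2))) ^ r
      = (((2 - q) / (B * (r - q))) ^ ((1:ℝ) / (r - 2))) ^ (2:ℝ) *
          ((r - 2) / (r - q)
            - A * B ^ ((2 - q) / (r - 2)) * ((r - q) / (2 - q)) ^ ((2 - q) / (r - 2))) ∧
    0 < (((2 - q) / (B * (r - q))) ^ ((1:ℝ) / (r - 2))) ^ (2:ℝ) *
          ((r - 2) / (r - q)
            - A * B ^ ((2 - q) / (r - 2)) * ((r - q) / (2 - q)) ^ ((2 - q) / (r - 2))) :=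
  stmt1_general q r A B hq2 hr hA hB hd
end

section
/- Let 2<r<k and A₀,B₀>0, and define Θ(t)=t^k+A₀·t²−B₀·t^r for t≥0. Then inf_{t≥0} Θ(t) < 0 if and only if A₀^{k−r}·B₀^{2−k} < d₀(r) := (k−r)^{k−r}·(r−2)^{r−2}/(k−2)^{k−2}. -/
/-! For `t > 0`, `t ^ r` is the weighted geometric mean `(t ^ p) ^ w₁ * (t ^ q) ^ w₂` with
`w₁ = (q - r) / (q - p)` and `w₂ = (r - p) / (q - p)`. Weighted AM-GM therefore gives
`t ^ q + A t ^ p ≥ C t ^ r` for an explicit constant `C`, with equality at some `t > 0`, so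
`Θ(t) = t ^ q + A t ^ p - B t ^ r` takes negative values exactly when `C < B`. Raising both sides
to the power `q - p` turns `C < B` into `A ^ (q - r) B ^ (p - q) < d₀`; the theorem is the case
`p = 2`, `q = k`. -/

open Real Set

namespace Real

theorem div_rpow_mul_div_rpow_le_add {x y w₁ w₂ : ℝ} (hx : 0 ≤ x) (hy : 0 ≤ y) (hw₁ : 0 < w₁)
    (hw₂ : 0 < w₂) (hw : w₁ + w₂ = 1) : (x / w₁) ^ w₁ * (y / w₂) ^ w₂ ≤ x + y := by
  have h := geom_mean_le_arith_mean2_weighted hw₁.le hw₂.le (div_nonneg hx hw₁.le)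
    (div_nonneg hy hw₂.le) hw
  rwa [mul_div_cancel₀ x hw₁.ne', mul_div_cancel₀ y hw₂.ne'] at h

theorem div_rpow_mul_div_rpow_eq_add {x y w₁ w₂ : ℝ} (hx : 0 ≤ x) (hw₁ : 0 < w₁) (hw₂ : 0 < w₂)
    (hw : w₁ + w₂ = 1) (hxy : x / w₁ = y / w₂) : (x / w₁) ^ w₁ * (y / w₂) ^ w₂ = x + y := by
  have hy : y = w₂ * (x / w₁) := by rw [hxy, mul_div_cancel₀ y hw₂.ne']
  rw [← hxy, ← rpow_add' (div_nonneg hx hw₁.le) (by simp [hw]), hw, rpow_one, hy]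
  field_simp
  linear_combination -x * hw

end Real

noncomputable def theta (p r q A B t : ℝ) : ℝ := t ^ q + A * t ^ p - B * t ^ r

/-- The minimum over `t > 0` of `(t ^ q + A * t ^ p) / t ^ r`. -/
noncomputable def minQuot (p r q A : ℝ) : ℝ :=
  (A * (q - p) / (q - r)) ^ ((q - r) / (q - p)) * ((q - p) / (r - p)) ^ ((r - p) / (q - p))

section

variable {p r q A B : ℝ}

theorem theta_zero (hp : p ≠ 0) (hr : r ≠ 0) (hq : q ≠ 0) : theta p r q A B 0 = 0 := by
  simp [theta, zero_rpow hp, zero_rpow hr, zero_rpow hq]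

theorem minQuot_mul_rpow (hA : 0 ≤ A) (hpr : p < r) (hrq : r < q) {t : ℝ} (ht : 0 < t) :
    minQuot p r q A * t ^ r =
      (A * t ^ p / ((q - r) / (q - p))) ^ ((q - r) / (q - p)) *
        (t ^ q / ((r - p) / (q - p))) ^ ((r - p) / (q - p)) := by
  have hqr : 0 < q - r := sub_pos.2 hrq
  have hrp : 0 < r - p := sub_pos.2 hpr
  have hqp : 0 < q - p := by linarith
  have h₁ : A * t ^ p / ((q - r) / (q - p)) = A * (q - p) / (q - r) * t ^ p := by field_simp
  have h₂ : t ^ q / ((r - p) / (q - p)) = (q - p) / (r - p) * t ^ q := by field_simp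
  have hr : t ^ r = (t ^ p) ^ ((q - r) / (q - p)) * (t ^ q) ^ ((r - p) / (q - p)) := by
    rw [← rpow_mul ht.le, ← rpow_mul ht.le, ← rpow_add ht]
    congr 1
    field_simp
    ring
  rw [h₁, h₂, mul_rpow (by positivity) (by positivity), mul_rpow (by positivity) (by positivity),
    hr, minQuot]
  ring

theorem minQuot_mul_rpow_le (hA : 0 ≤ A) (hpr : p < r) (hrq : r < q) {t : ℝ} (ht : 0 < t) :
    minQuot p r q A * t ^ r ≤ t ^ q + A * t ^ p := by
  have hqp : 0 < q - p := by linarith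
  rw [minQuot_mul_rpow hA hpr hrq ht, add_comm]
  exact div_rpow_mul_div_rpow_le_add (by positivity) (by positivity)
    (div_pos (sub_pos.2 hrq) hqp) (div_pos (sub_pos.2 hpr) hqp) (by field_simp; ring)

theorem exists_minQuot_mul_rpow_eq (hA : 0 < A) (hpr : p < r) (hrq : r < q) :
    ∃ t > 0, minQuot p r q A * t ^ r = t ^ q + A * t ^ p := by
  have hqr : 0 < q - r := sub_pos.2 hrq
  have hrp : 0 < r - p := sub_pos.2 hpr
  have hqp : 0 < q - p := by linarith
  -- weighted AM-GM is sharp where `A t^p / w₁ = t^q / w₂`, i.e. `t^(q-p) = A (r-p) / (q-r)`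
  obtain ⟨t, ht, htqp⟩ : ∃ t > 0, t ^ (q - p) = A * (r - p) / (q - r) :=
    ⟨_, by positivity, rpow_inv_rpow (by positivity) hqp.ne'⟩
  refine ⟨t, ht, ?_⟩
  have htq : t ^ q = t ^ p * (A * (r - p) / (q - r)) := by
    rw [← htqp, ← rpow_add ht]
    ring_nf
  rw [minQuot_mul_rpow hA.le hpr hrq ht, add_comm]
  refine div_rpow_mul_div_rpow_eq_add (by positivity) (by positivity) (by positivity)
    (by field_simp; ring) ?_
  rw [htq]
  field_simp

theorem exists_theta_neg_iff (hp : 0 < p) (hpr : p < r) (hrq : r < q) (hA : 0 < A) :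
    (∃ t ∈ Ici 0, theta p r q A B t < 0) ↔ minQuot p r q A < B := by
  constructor
  · rintro ⟨t, ht, hneg⟩
    obtain rfl | ht := (mem_Ici.1 ht).eq_or_lt
    · rw [theta_zero hp.ne' (by linarith) (by linarith)] at hneg
      exact absurd hneg (lt_irrefl 0)
    · have hle := minQuot_mul_rpow_le hA.le hpr hrq ht
      have htr := rpow_pos_of_pos ht r
      unfold theta at hneg
      nlinarith
  · intro hlt
    obtain ⟨t, ht, heq⟩ := exists_minQuot_mul_rpow_eq hA hpr hrq
    have htr := rpow_pos_of_pos ht r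
    refine ⟨t, ht.le, ?_⟩
    unfold theta
    nlinarith

theorem minQuot_rpow (hA : 0 ≤ A) (hpr : p < r) (hrq : r < q) :
    minQuot p r q A ^ (q - p) =
      A ^ (q - r) / ((q - r) ^ (q - r) * (r - p) ^ (r - p) / (q - p) ^ (q - p)) := by
  have hqr : 0 < q - r := sub_pos.2 hrq
  have hrp : 0 < r - p := sub_pos.2 hpr
  have hqp : 0 < q - p := by linarith
  rw [minQuot, mul_rpow (by positivity) (by positivity), ← rpow_mul (by positivity),
    ← rpow_mul (by positivity), div_mul_cancel₀ _ hqp.ne', div_mul_cancel₀ _ hqp.ne',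
    div_rpow (by positivity) hqr.le, mul_rpow hA hqp.le, div_rpow hqp.le hrp.le]
  have : (q - p) ^ (q - p) = (q - p) ^ (q - r) * (q - p) ^ (r - p) := by
    rw [← rpow_add hqp]
    ring_nf
  rw [this]
  field_simp

theorem minQuot_lt_iff (hA : 0 ≤ A) (hB : 0 < B) (hpr : p < r) (hrq : r < q) :
    minQuot p r q A < B ↔
      A ^ (q - r) * B ^ (p - q) < (q - r) ^ (q - r) * (r - p) ^ (r - p) / (q - p) ^ (q - p) := by
  have hqr : 0 < q - r := sub_pos.2 hrq
  have hrp : 0 < r - p := sub_pos.2 hpr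
  have hqp : 0 < q - p := by linarith
  have hm : 0 ≤ minQuot p r q A := by unfold minQuot; positivity
  rw [← rpow_lt_rpow_iff hm hB.le hqp, minQuot_rpow hA hpr hrq, div_lt_iff₀ (by positivity),
    show p - q = -(q - p) by ring, rpow_neg hB.le, ← div_eq_mul_inv, div_lt_iff₀ (by positivity),
    mul_comm]

theorem bddBelow_theta (hA : 0 ≤ A) (hB : 0 ≤ B) (hr : 0 ≤ r) (hrq : r < q) :
    BddBelow (theta p r q A B '' Ici 0) := by
  have hqr : 0 < q - r := sub_pos.2 hrq
  -- past `T = B ^ (q - r)⁻¹` the term `t ^ q` dominates `B * t ^ r`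
  set T := B ^ (q - r)⁻¹
  refine ⟨-(B * T ^ r), forall_mem_image.2 fun t ht => ?_⟩
  have ht : 0 ≤ t := ht
  have hAt : 0 ≤ A * t ^ p := by positivity
  unfold theta
  rcases le_total t T with htT | hTt
  · have := mul_le_mul_of_nonneg_left (rpow_le_rpow ht htT hr) hB
    nlinarith [rpow_nonneg ht q]
  · have hBt : B ≤ t ^ (q - r) :=
      calc B = T ^ (q - r) := (rpow_inv_rpow hB hqr.ne').symm
        _ ≤ t ^ (q - r) := rpow_le_rpow (by positivity) hTt hqr.le
    have htq : t ^ q = t ^ (q - r) * t ^ r := by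
      rw [← rpow_add' ht (by linarith)]
      ring_nf
    have := mul_le_mul_of_nonneg_right hBt (rpow_nonneg ht r)
    have hBT : 0 ≤ B * T ^ r := by positivity
    nlinarith

end

theorem stmt4 (r k A₀ B₀ : ℝ) (hr : 2 < r) (hk : r < k) (hA : 0 < A₀) (hB : 0 < B₀) :
    sInf ((fun t : ℝ => t ^ k + A₀ * t ^ (2:ℝ) - B₀ * t ^ r) '' Set.Ici 0) < 0 ↔
      A₀ ^ (k - r) * B₀ ^ (2 - k) <
        (k - r) ^ (k - r) * (r - 2) ^ (r - 2) / (k - 2) ^ (k - 2) := by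
  change sInf (theta 2 r k A₀ B₀ '' Ici 0) < 0 ↔ _
  rw [csInf_lt_iff (bddBelow_theta hA.le hB.le (by linarith) hk) (nonempty_Ici.image _),
    exists_mem_image, exists_theta_neg_iff two_pos hr hk hA, minQuot_lt_iff hA.le hB hr hk]
end

section
/- Let 2<r<k, A₀,B₀>0 with A₀^{k−r}·B₀^{2−k} < (k−r)^{k−r}(r−2)^{r−2}/(k−2)^{k−2}, and define Θ(t)=t^k+A₀·t²−B₀·t^r. Then there exist 0<t₀<t_{B₀}<t₁ (where t_{B₀}=(B₀(r−2)/(k−2))^{1/(k−r)}) such that Θ(t₀)=Θ(t₁)=0 and Θ(t)>0 for all t∈(0,t₀)∪(t₁,∞). -/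
open Real Set

theorem stmt6 (r k A₀ B₀ : ℝ) (hr : 2 < r) (hk : r < k) (hA : 0 < A₀) (hB : 0 < B₀)
    (hd : A₀ ^ (k - r) * B₀ ^ (2 - k) <
      (k - r) ^ (k - r) * (r - 2) ^ (r - 2) / (k - 2) ^ (k - 2)) :
    ∃ t₀ t₁ : ℝ, 0 < t₀ ∧ t₀ < (B₀ * (r - 2) / (k - 2)) ^ ((1:ℝ) / (k - r)) ∧
      (B₀ * (r - 2) / (k - 2)) ^ ((1:ℝ) / (k - r)) < t₁ ∧
      t₀ ^ k + A₀ * t₀ ^ (2:ℝ) - B₀ * t₀ ^ r = 0 ∧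
      t₁ ^ k + A₀ * t₁ ^ (2:ℝ) - B₀ * t₁ ^ r = 0 ∧
      ∀ t : ℝ, (0 < t ∧ t < t₀) ∨ t₁ < t → 0 < t ^ k + A₀ * t ^ (2:ℝ) - B₀ * t ^ r := by
  have hkr : (0:ℝ) < k - r := by linarith
  have hr2 : (0:ℝ) < r - 2 := by linarith
  have hk2 : (0:ℝ) < k - 2 := by linarith
  have hm : (0:ℝ) < B₀ * (r - 2) / (k - 2) := by positivity
  set m : ℝ := B₀ * (r - 2) / (k - 2) with hmdef
  set tB : ℝ := m ^ ((1:ℝ) / (k - r)) with htBdef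
  have htBpos : 0 < tB := Real.rpow_pos_of_pos hm _
  have htBkr : tB ^ (k - r) = m := by
    rw [htBdef, one_div, Real.rpow_inv_rpow hm.le (ne_of_gt hkr)]
  set g : ℝ → ℝ := fun t => t ^ (k - 2) + A₀ - B₀ * t ^ (r - 2) with hgdef
  -- Θ(t) = t² g(t) for t > 0
  have hTheta : ∀ t : ℝ, 0 < t →
      t ^ k + A₀ * t ^ (2:ℝ) - B₀ * t ^ r = t ^ (2:ℝ) * g t := by
    intro t ht
    have h1 : t ^ k = t ^ (2:ℝ) * t ^ (k - 2) := by
      rw [← Real.rpow_add ht]; ring_nf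
    have h2 : t ^ r = t ^ (2:ℝ) * t ^ (r - 2) := by
      rw [← Real.rpow_add ht]; ring_nf
    rw [h1, h2, hgdef]; ring
  -- continuity
  have hcont : Continuous g := by
    have h1 : ∀ p : ℝ, 0 < p → Continuous fun t : ℝ => t ^ p := fun p hp =>
      continuous_iff_continuousAt.2 fun x =>
        Real.continuousAt_rpow_const x p (Or.inr hp.le)
    exact (((h1 _ hk2).add continuous_const).sub (continuous_const.mul (h1 _ hr2)))
  -- derivative
  have hderiv : ∀ t : ℝ, t ≠ 0 → HasDerivAt g
      ((k - 2) * t ^ (k - 2 - 1) - B₀ * ((r - 2) * t ^ (r - 2 - 1))) t := by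
    intro t ht
    exact ((Real.hasDerivAt_rpow_const (Or.inl ht)).add_const A₀).sub
      ((Real.hasDerivAt_rpow_const (Or.inl ht)).const_mul B₀)
  have hderiv_eq : ∀ t : ℝ, 0 < t →
      deriv g t = t ^ (r - 2 - 1) * ((k - 2) * t ^ (k - r) - B₀ * (r - 2)) := by
    intro t ht
    rw [(hderiv t ht.ne').deriv]
    have : t ^ (k - 2 - 1) = t ^ (r - 2 - 1) * t ^ (k - r) := by
      rw [← Real.rpow_add ht]; ring_nf
    rw [this]; ring
  -- strict antitone on [0, tB]
  have hanti : StrictAntiOn g (Icc 0 tB) := by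
    apply strictAntiOn_of_deriv_neg (convex_Icc _ _) hcont.continuousOn
    intro x hx
    rw [interior_Icc] at hx
    rw [hderiv_eq x hx.1]
    have hxkr : x ^ (k - r) < m := by
      rw [← htBkr]; exact Real.rpow_lt_rpow hx.1.le hx.2 hkr
    have h2 : (k - 2) * x ^ (k - r) - B₀ * (r - 2) < 0 := by
      rw [hmdef] at hxkr
      have := (lt_div_iff₀ hk2).mp hxkr
      nlinarith [this]
    have h3 : (0:ℝ) < x ^ (r - 2 - 1) := Real.rpow_pos_of_pos hx.1 _
    exact mul_neg_of_pos_of_neg h3 h2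
  -- strict monotone on [tB, ∞)
  have hmono : StrictMonoOn g (Ici tB) := by
    apply strictMonoOn_of_deriv_pos (convex_Ici _) hcont.continuousOn
    intro x hx
    rw [interior_Ici] at hx
    have hxpos : 0 < x := htBpos.trans hx
    rw [hderiv_eq x hxpos]
    have hxkr : m < x ^ (k - r) := by
      rw [← htBkr]; exact Real.rpow_lt_rpow htBpos.le hx hkr
    have h2 : 0 < (k - 2) * x ^ (k - r) - B₀ * (r - 2) := by
      rw [hmdef] at hxkr
      have := (div_lt_iff₀ hk2).mp hxkr
      nlinarith [this]
    exact mul_pos (Real.rpow_pos_of_pos hxpos _) h2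
  -- g 0 = A₀
  have hg0 : g 0 = A₀ := by
    simp [hgdef, Real.zero_rpow (ne_of_gt hk2), Real.zero_rpow (ne_of_gt hr2)]
  -- g tB < 0
  set X : ℝ := tB ^ (r - 2) * (B₀ * (k - r) / (k - 2)) with hXdef
  have hXpos : 0 < X := by
    have := Real.rpow_pos_of_pos htBpos (r - 2); positivity
  have htBk2 : tB ^ (k - 2) = tB ^ (r - 2) * tB ^ (k - r) := by
    rw [← Real.rpow_add htBpos]; ring_nf
  have hgtB : g tB = A₀ - X := by
    rw [hgdef]
    simp only
    rw [htBk2, htBkr, hXdef, hmdef]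
    field_simp
    ring
  have hXkr : X ^ (k - r) =
      B₀ ^ (k - 2) * ((k - r) ^ (k - r) * (r - 2) ^ (r - 2) / (k - 2) ^ (k - 2)) := by
    have h1 : (0:ℝ) ≤ tB ^ (r - 2) := (Real.rpow_pos_of_pos htBpos _).le
    have h2 : (0:ℝ) ≤ B₀ * (k - r) / (k - 2) := by positivity
    rw [hXdef, Real.mul_rpow h1 h2]
    have h3 : (tB ^ (r - 2)) ^ (k - r) = m ^ (r - 2) := by
      rw [← Real.rpow_mul htBpos.le, mul_comm (r-2) (k-r), Real.rpow_mul htBpos.le, htBkr]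
    rw [h3, hmdef]
    rw [Real.div_rpow (by positivity) hk2.le, Real.div_rpow (by positivity) hk2.le,
      Real.mul_rpow hB.le hr2.le, Real.mul_rpow hB.le hkr.le]
    rw [div_mul_div_comm]
    have h4 : B₀ ^ (r - 2) * (r - 2) ^ (r - 2) * (B₀ ^ (k - r) * (k - r) ^ (k - r))
        = B₀ ^ (k - 2) * ((k - r) ^ (k - r) * (r - 2) ^ (r - 2)) := by
      have hb : B₀ ^ (r - 2) * B₀ ^ (k - r) = B₀ ^ (k - 2) := by
        rw [← Real.rpow_add hB]; ring_nf
      rw [← hb]; ring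
    have h5 : (k - 2) ^ (r - 2) * (k - 2) ^ (k - r) = (k - 2) ^ (k - 2) := by
      rw [← Real.rpow_add hk2]; ring_nf
    rw [h4, h5, mul_div_assoc]
  have hAX : A₀ < X := by
    by_contra hcon
    push_neg at hcon
    have h1 : X ^ (k - r) ≤ A₀ ^ (k - r) := Real.rpow_le_rpow hXpos.le hcon hkr.le
    have h2 : A₀ ^ (k - r) < X ^ (k - r) := by
      rw [hXkr]
      have hBk2 : (0:ℝ) < B₀ ^ (k - 2) := Real.rpow_pos_of_pos hB _
      have h3 : A₀ ^ (k - r) * B₀ ^ (2 - k) * B₀ ^ (k - 2) <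
          ((k - r) ^ (k - r) * (r - 2) ^ (r - 2) / (k - 2) ^ (k - 2)) * B₀ ^ (k - 2) :=
        mul_lt_mul_of_pos_right hd hBk2
      have h4 : B₀ ^ (2 - k) * B₀ ^ (k - 2) = 1 := by
        rw [← Real.rpow_add hB]; norm_num
      calc A₀ ^ (k - r) = A₀ ^ (k - r) * (B₀ ^ (2 - k) * B₀ ^ (k - 2)) := by rw [h4]; ring
        _ = A₀ ^ (k - r) * B₀ ^ (2 - k) * B₀ ^ (k - 2) := by ring
        _ < ((k - r) ^ (k - r) * (r - 2) ^ (r - 2) / (k - 2) ^ (k - 2)) * B₀ ^ (k - 2) := h3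
        _ = B₀ ^ (k - 2) * ((k - r) ^ (k - r) * (r - 2) ^ (r - 2) / (k - 2) ^ (k - 2)) := by ring
    linarith
  have hgtBneg : g tB < 0 := by rw [hgtB]; linarith
  -- root t₀ in (0, tB)
  obtain ⟨t₀, ht₀mem, hgt₀⟩ : ∃ t₀ ∈ Ioo (0:ℝ) tB, g t₀ = 0 := by
    have h := intermediate_value_Ioo' htBpos.le hcont.continuousOn
      (f := g) (a := 0) (b := tB)
    have : (0:ℝ) ∈ Ioo (g tB) (g 0) := by rw [hg0]; exact ⟨hgtBneg, hA⟩
    obtain ⟨t₀, ht₀, hgt₀⟩ := h this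
    exact ⟨t₀, ht₀, hgt₀⟩
  -- big T with g T > 0
  set T : ℝ := max tB (B₀ ^ (k - r)⁻¹) + 1 with hTdef
  have hTtB : tB < T := by
    rw [hTdef]
    have := le_max_left tB (B₀ ^ (k - r)⁻¹); linarith
  have hTpos : 0 < T := htBpos.trans hTtB
  have hTB : B₀ < T ^ (k - r) := by
    have h1 : B₀ ^ (k - r)⁻¹ < T := by
      rw [hTdef]
      have := le_max_right tB (B₀ ^ (k - r)⁻¹); linarith
    calc B₀ = (B₀ ^ (k - r)⁻¹) ^ (k - r) := (Real.rpow_inv_rpow hB.le (ne_of_gt hkr)).symm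
      _ < T ^ (k - r) := Real.rpow_lt_rpow (Real.rpow_pos_of_pos hB _).le h1 hkr
  have hgT : 0 < g T := by
    have hTk2 : T ^ (k - 2) = T ^ (r - 2) * T ^ (k - r) := by
      rw [← Real.rpow_add hTpos]; ring_nf
    have h1 : (0:ℝ) < T ^ (r - 2) := Real.rpow_pos_of_pos hTpos _
    have : g T = T ^ (r - 2) * (T ^ (k - r) - B₀) + A₀ := by
      rw [hgdef]; simp only; rw [hTk2]; ring
    rw [this]
    have h2 : 0 < T ^ (k - r) - B₀ := by linarith
    nlinarith
  -- root t₁ in (tB, T)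
  obtain ⟨t₁, ht₁mem, hgt₁⟩ : ∃ t₁ ∈ Ioo tB T, g t₁ = 0 := by
    have h := intermediate_value_Ioo hTtB.le hcont.continuousOn (f := g) (a := tB) (b := T)
    have : (0:ℝ) ∈ Ioo (g tB) (g T) := ⟨hgtBneg, hgT⟩
    obtain ⟨t₁, ht₁, hgt₁⟩ := h this
    exact ⟨t₁, ht₁, hgt₁⟩
  refine ⟨t₀, t₁, ht₀mem.1, ht₀mem.2, ht₁mem.1, ?_, ?_, ?_⟩
  · rw [hTheta t₀ ht₀mem.1, hgt₀]; ring
  · have : 0 < t₁ := htBpos.trans ht₁mem.1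
    rw [hTheta t₁ this, hgt₁]; ring
  · rintro t (⟨ht, ht0⟩ | ht1)
    · have hgt : 0 < g t := by
        have h1 : t ∈ Icc (0:ℝ) tB := ⟨ht.le, (ht0.trans ht₀mem.2).le⟩
        have h2 : t₀ ∈ Icc (0:ℝ) tB := ⟨ht₀mem.1.le, ht₀mem.2.le⟩
        have := hanti h1 h2 ht0
        rw [hgt₀] at this; exact this
      rw [hTheta t ht]
      exact mul_pos (Real.rpow_pos_of_pos ht _) hgt
    · have htpos : 0 < t := htBpos.trans (ht₁mem.1.trans ht1)
      have hgt : 0 < g t := by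
        have h1 : t₁ ∈ Ici tB := ht₁mem.1.le
        have h2 : t ∈ Ici tB := (ht₁mem.1.trans ht1).le
        have := hmono h1 h2 ht1
        rw [hgt₁] at this; exact this
      rw [hTheta t htpos]
      exact mul_pos (Real.rpow_pos_of_pos htpos _) hgt
end

section
/- Let b, P, C, Λ, S₂ > 0, 1<q<2<r, and S_r>0, and suppose P<b. Define J(t) = ((b−P)/2)·t² − (C/(r·S_r^r))·t^r − (Λ/(q·S₂^q))·t^q for t≥0. If Λ < Λ₀ := ((r−2)·S₂^q/2)·((b−P)/(r−q))^{(r−q)/(r−2)}·(r·S_r^r·(2−q)/(2C))^{(2−q)/(r−2)}, then there exists ρ>0 with J(ρ)>0. -/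
/-!
Write `J(t) = t^q (A t^(2-q) - B t^(r-q) - D)` with `A = (b-P)/2`, `B = C/(r Sr^r)` and
`D = Λ/(q S₂^q)`. The map `t ↦ A t^(2-q) - B t^(r-q)` is maximised where
`t^(r-2) = (2-q)A/((r-q)B)`, with maximum `(r-2)/(r-q) · A · ((2-q)A/((r-q)B))^((2-q)/(r-2))`.
This maximum is exactly `Λ₀ / S₂^q`, so `Λ < Λ₀` and `q > 1` give `D` below it, and `J` is
positive at the maximiser.
-/

open Real

section RpowProfile

variable {A B D α β γ μ ν : ℝ}

lemma mul_rpow_sub_mul_rpow_of_rpow_sub_eq {s : ℝ} (hs : 0 < s) (hB : B ≠ 0) (hβ : β ≠ 0)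
    (hcrit : s ^ (β - α) = α * A / (β * B)) :
    A * s ^ α - B * s ^ β = (β - α) / β * A * s ^ α := by
  have hsplit : s ^ β = s ^ α * s ^ (β - α) := by
    rw [← rpow_add hs, add_sub_cancel]
  rw [hsplit, hcrit]
  field_simp

lemma exists_pos_lt_mul_rpow_sub_mul_rpow (hA : 0 < A) (hB : 0 < B) (hα : 0 < α) (hαβ : α < β)
    (hD : D < (β - α) / β * A * (α * A / (β * B)) ^ (α / (β - α))) :
    ∃ s > 0, D < A * s ^ α - B * s ^ β := by
  have hX : 0 < α * A / (β * B) := by have := hα.trans hαβ; positivity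
  refine ⟨(α * A / (β * B)) ^ (β - α)⁻¹, rpow_pos_of_pos hX _, ?_⟩
  rw [mul_rpow_sub_mul_rpow_of_rpow_sub_eq (rpow_pos_of_pos hX _) hB.ne' (by linarith)
    (rpow_inv_rpow hX.le (by linarith)), ← rpow_mul hX.le, ← div_eq_inv_mul]
  exact hD

lemma exists_pos_mul_rpow_sub_mul_rpow_sub_mul_rpow (hA : 0 < A) (hB : 0 < B) (hγμ : γ < μ)
    (hμν : μ < ν)
    (hD : D < (ν - μ) / (ν - γ) * A * ((μ - γ) * A / ((ν - γ) * B)) ^ ((μ - γ) / (ν - μ))) :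
    ∃ t > 0, 0 < A * t ^ μ - B * t ^ ν - D * t ^ γ := by
  have hdiff : ν - γ - (μ - γ) = ν - μ := by ring
  obtain ⟨t, ht, hDt⟩ := exists_pos_lt_mul_rpow_sub_mul_rpow (D := D) hA hB (sub_pos.2 hγμ)
    (by linarith : μ - γ < ν - γ) (by rwa [hdiff])
  refine ⟨t, ht, ?_⟩
  have htγ : 0 < t ^ γ := rpow_pos_of_pos ht γ
  rw [rpow_sub ht, rpow_sub ht,
    show A * (t ^ μ / t ^ γ) - B * (t ^ ν / t ^ γ) = (A * t ^ μ - B * t ^ ν) / t ^ γ by ring,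
    lt_div_iff₀ htγ] at hDt
  linarith

end RpowProfile

lemma kirchhoff_threshold_eq {q r b P C S₂ Sr : ℝ} (hq2 : q < 2) (hr : 2 < r) (hC : 0 < C)
    (hSr : 0 < Sr) (hPb : P < b) :
    (r - 2) * S₂ ^ q / 2 * ((b - P) / (r - q)) ^ ((r - q) / (r - 2)) *
        (r * Sr ^ r * (2 - q) / (2 * C)) ^ ((2 - q) / (r - 2)) =
      S₂ ^ q * ((r - 2) / (r - q) * ((b - P) / 2) *
        ((2 - q) * ((b - P) / 2) / ((r - q) * (C / (r * Sr ^ r)))) ^ ((2 - q) / (r - 2))) := by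
  have hx : 0 < (b - P) / (r - q) := div_pos (by linarith) (by linarith)
  have hy : 0 ≤ r * Sr ^ r * (2 - q) / (2 * C) := by
    have := rpow_pos_of_pos hSr r
    have : 0 < r := by linarith
    have : 0 < 2 - q := by linarith
    positivity
  have hexp : (r - q) / (r - 2) = 1 + (2 - q) / (r - 2) := by
    field_simp [(by linarith : r - 2 ≠ 0)]
    ring
  have hprod : (2 - q) * ((b - P) / 2) / ((r - q) * (C / (r * Sr ^ r))) =
      (b - P) / (r - q) * (r * Sr ^ r * (2 - q) / (2 * C)) := by
    have := (rpow_pos_of_pos hSr r).ne'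
    field_simp [(by linarith : r ≠ 0)]
  rw [hprod, mul_rpow hx.le hy, hexp, rpow_add hx, rpow_one]
  field_simp [(by linarith : r - q ≠ 0)]

theorem stmt7_general (q r b P C Λ S₂ Sr : ℝ) (hq1 : 1 < q) (hq2 : q < 2) (hr : 2 < r)
    (hC : 0 < C) (hΛ : 0 < Λ) (hS₂ : 0 < S₂) (hSr : 0 < Sr)
    (hPb : P < b)
    (hΛ0 : Λ < (r - 2) * S₂ ^ q / 2 * ((b - P) / (r - q)) ^ ((r - q) / (r - 2)) *
        (r * Sr ^ r * (2 - q) / (2 * C)) ^ ((2 - q) / (r - 2))) :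
    ∃ ρ : ℝ, 0 < ρ ∧
      0 < (b - P) / 2 * ρ ^ (2:ℝ) - C / (r * Sr ^ r) * ρ ^ r - Λ / (q * S₂ ^ q) * ρ ^ q := by
  have hS₂q : 0 < S₂ ^ q := rpow_pos_of_pos hS₂ q
  have hD : Λ / (q * S₂ ^ q) < Λ / S₂ ^ q :=
    div_lt_div_of_pos_left hΛ hS₂q (lt_mul_of_one_lt_left hS₂q hq1)
  rw [kirchhoff_threshold_eq hq2 hr hC hSr hPb, ← div_lt_iff₀' hS₂q] at hΛ0
  have hB : 0 < C / (r * Sr ^ r) := by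
    have := rpow_pos_of_pos hSr r
    have : 0 < r := by linarith
    positivity
  exact exists_pos_mul_rpow_sub_mul_rpow_sub_mul_rpow (by linarith) hB hq2 hr (hD.trans hΛ0)

theorem stmt7 (q r b P C Λ S₂ Sr : ℝ) (hq1 : 1 < q) (hq2 : q < 2) (hr : 2 < r)
    (hb : 0 < b) (hP : 0 < P) (hC : 0 < C) (hΛ : 0 < Λ) (hS₂ : 0 < S₂) (hSr : 0 < Sr)
    (hPb : P < b)
    (hΛ0 : Λ < (r - 2) * S₂ ^ q / 2 * ((b - P) / (r - q)) ^ ((r - q) / (r - 2)) *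
        (r * Sr ^ r * (2 - q) / (2 * C)) ^ ((2 - q) / (r - 2))) :
    ∃ ρ : ℝ, 0 < ρ ∧
      0 < (b - P) / 2 * ρ ^ (2:ℝ) - C / (r * Sr ^ r) * ρ ^ r - Λ / (q * S₂ ^ q) * ρ ^ q :=
  stmt7_general q r b P C Λ S₂ Sr hq1 hq2 hr hC hΛ hS₂ hSr hPb hΛ0
end
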